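/- arXiv:1712.03564 — 2 statements merged into one kernel-verified Lean document; each statement's English description precedes it below -/
import Mathlib

section
/- For every natural number s and every real number k ≥ 1, one has 2(k−1)^s − k^s − (k−2)^s ≤ 2·4^s·k^s/k², where the powers of (k−1), k, (k−2) and 4 are natural-number powers. -/
/-- Bound from Section 7 (gamma kernel example): for `k ≥ 1`,
`2(k-1)^s - k^s - (k-2)^s ≤ 2·4^s·k^s / k²`. -/
theorem second_difference_bound (s : ℕ) (k : ℝ) (hk : 1 ≤ k) :
    2 * (k - 1) ^ s - k ^ s - (k - 2) ^ s ≤ 2 * 4 ^ s * k ^ s / k ^ 2 := by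
  have hk0 : (0:ℝ) < k := lt_of_lt_of_le one_pos hk
  have hRHS : (0:ℝ) ≤ 2 * 4 ^ s * k ^ s / k ^ 2 := by positivity
  rcases le_or_gt 2 k with h2 | h2
  · -- k ≥ 2 : convexity of x ^ s on [0, ∞)
    have hx : (k - 2 : ℝ) ∈ Set.Ici (0:ℝ) := by simp; linarith
    have hy : (k : ℝ) ∈ Set.Ici (0:ℝ) := by simp; linarith
    have h := (convexOn_pow s).2 hx hy (by norm_num : (0:ℝ) ≤ 1/2)
      (by norm_num : (0:ℝ) ≤ 1/2) (by norm_num)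
    simp only [smul_eq_mul] at h
    have heq : (1/2 : ℝ) * (k - 2) + 1/2 * k = k - 1 := by ring
    rw [heq] at h
    linarith
  · match s with
    | 0 => norm_num; positivity
    | 1 =>
      have h : 2 * (k - 1) ^ 1 - k ^ 1 - (k - 2) ^ 1 = 0 := by ring
      rw [h]; exact hRHS
    | (n + 2) =>
      have hk1 : (0:ℝ) ≤ k - 1 := by linarith
      have ha : (k - 1 : ℝ) ^ (n + 2) ≤ 1 := pow_le_one₀ hk1 (by linarith)
      have hb : (1:ℝ) ≤ k ^ (n + 2) := one_le_pow₀ hk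
      have hcabs : |k - 2| ≤ 1 := by rw [abs_le]; constructor <;> linarith
      have hc : -(1:ℝ) ≤ (k - 2) ^ (n + 2) := by
        have : |(k - 2) ^ (n + 2)| ≤ 1 := by
          rw [abs_pow]; exact pow_le_one₀ (abs_nonneg _) hcabs
        exact neg_le_of_abs_le this |>.trans_eq rfl |> fun h => h
      have hLHS : 2 * (k - 1) ^ (n + 2) - k ^ (n + 2) - (k - 2) ^ (n + 2) ≤ 3 := by
        linarith
      have h4 : (16:ℝ) ≤ 4 ^ (n + 2) := by
        calc (16:ℝ) = 4 ^ 2 := by norm_num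
        _ ≤ 4 ^ (n + 2) := pow_le_pow_right₀ (by norm_num) (by omega)
      have hk2 : k ^ 2 ≤ 4 := by nlinarith
      have hk2pos : (0:ℝ) < k ^ 2 := by positivity
      have hR : (3:ℝ) ≤ 2 * 4 ^ (n + 2) * k ^ (n + 2) / k ^ 2 := by
        rw [le_div_iff₀ hk2pos]
        nlinarith
      linarith
end

section
/- For every real number x, the series ∑_{k=1}^{∞} (2k^x − (k−1)^x − (k+1)^x)² / (16·k^{2x}) converges, where for a nonnegative real base a and real exponent x, a^x denotes the real (rpow) power (so 0^x = 0 for x ≠ 0). -/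
open Real Set

lemma rpow_mid_bound (x a t : ℝ) (ha : 2 ≤ a) (ht : t ∈ Icc (a-1) (a+1)) :
    t ^ (x-2) ≤ ((2:ℝ)^(x-2) + 2^(2-x)) * a^(x-2) := by
  obtain ⟨ht1, ht2⟩ := ht
  have ht0 : (0:ℝ) < t := by linarith
  have ha0 : (0:ℝ) < a := by linarith
  rcases le_or_gt 0 (x - 2) with h | h
  · have : t ^ (x-2) ≤ (2*a) ^ (x-2) :=
      Real.rpow_le_rpow ht0.le (by linarith) h
    have h2 : (2*a) ^ (x-2) = 2^(x-2) * a^(x-2) :=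
      Real.mul_rpow (by norm_num) ha0.le
    have hpos : (0:ℝ) ≤ 2^(2-x) * a^(x-2) := by positivity
    nlinarith [Real.rpow_nonneg ha0.le (x-2)]
  · have hhalf : (0:ℝ) < a/2 := by linarith
    have : t ^ (x-2) ≤ (a/2) ^ (x-2) :=
      Real.rpow_le_rpow_of_nonpos hhalf (by linarith) h.le
    have h2 : (a/2) ^ (x-2) = a^(x-2) * 2^(2-x) := by
      rw [div_eq_mul_inv, Real.mul_rpow ha0.le (by norm_num), ← Real.rpow_neg_one 2,
        ← Real.rpow_mul (by norm_num : (0:ℝ) ≤ 2), show (-1)*(x-2) = 2-x by ring]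
    have hpos : (0:ℝ) ≤ 2^(x-2) * a^(x-2) := by positivity
    nlinarith [Real.rpow_nonneg ha0.le (x-2)]

lemma second_diff_bound (x a : ℝ) (ha : 2 ≤ a) :
    |2*a^x - (a-1)^x - (a+1)^x| ≤
      2 * |x| * (|x-1| * ((2:ℝ)^(x-2) + 2^(2-x))) * a^(x-2) := by
  have ha0 : (0:ℝ) < a := by linarith
  have h1 : (0:ℝ) < a - 1 := by linarith
  -- MVT on [a-1, a]
  have hc1 : ∃ c ∈ Ioo (a-1) a, x * c ^ (x-1) = (a^x - (a-1)^x) / (a - (a-1)) := by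
    apply exists_hasDerivAt_eq_slope (fun s => s ^ x) (fun s => x * s ^ (x-1))
      (by linarith)
    · exact continuousOn_id.rpow_const fun s hs => Or.inl (ne_of_gt (by rcases hs with ⟨l, r⟩; simp only [id_eq]; linarith))
    · intro t ht
      exact Real.hasDerivAt_rpow_const (Or.inl (ne_of_gt (by rcases ht with ⟨l, r⟩; linarith)))
  have hc2 : ∃ c ∈ Ioo a (a+1), x * c ^ (x-1) = ((a+1)^x - a^x) / ((a+1) - a) := by
    apply exists_hasDerivAt_eq_slope (fun s => s ^ x) (fun s => x * s ^ (x-1))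
      (by linarith)
    · exact continuousOn_id.rpow_const fun s hs => Or.inl (ne_of_gt (by rcases hs with ⟨l, r⟩; simp only [id_eq]; linarith))
    · intro t ht
      exact Real.hasDerivAt_rpow_const (Or.inl (ne_of_gt (by rcases ht with ⟨l, r⟩; linarith)))
  obtain ⟨c1, hc1m, hc1e⟩ := hc1
  obtain ⟨c2, hc2m, hc2e⟩ := hc2
  have e1 : a - (a-1) = 1 := by ring
  have e2 : (a+1) - a = 1 := by ring
  rw [e1, div_one] at hc1e
  rw [e2, div_one] at hc2e
  -- Lipschitz bound on t ↦ t^(x-1) over [a-1,a+1]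
  set B : ℝ := |x-1| * ((2:ℝ)^(x-2) + 2^(2-x)) * a^(x-2) with hB
  have hlip : ∀ u ∈ Icc (a-1) (a+1), ∀ v ∈ Icc (a-1) (a+1),
      ‖u ^ (x-1) - v ^ (x-1)‖ ≤ B * ‖u - v‖ := by
    intro u hu v hv
    have := Convex.norm_image_sub_le_of_norm_hasDerivWithin_le
      (f := fun t => t ^ (x-1)) (f' := fun t => (x-1) * t ^ (x-1-1))
      (s := Icc (a-1) (a+1)) (C := B)
      (fun t ht => (Real.hasDerivAt_rpow_const (p := x-1)
        (Or.inl (ne_of_gt (by rcases ht with ⟨l, r⟩; linarith)))).hasDerivWithinAt)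
      (fun t ht => by
        have htb := rpow_mid_bound x a t ha ht
        rw [show x-1-1 = x-2 by ring]
        have ht0 : (0:ℝ) ≤ t ^ (x-2) := Real.rpow_nonneg (by rcases ht with ⟨l,r⟩; linarith) _
        rw [Real.norm_eq_abs, abs_mul, abs_of_nonneg ht0, hB]
        have : (0:ℝ) ≤ |x-1| := abs_nonneg _
        calc |x-1| * t^(x-2) ≤ |x-1| * (((2:ℝ)^(x-2) + 2^(2-x)) * a^(x-2)) := by
              exact mul_le_mul_of_nonneg_left htb this
          _ = |x-1| * ((2:ℝ)^(x-2) + 2^(2-x)) * a^(x-2) := by ring)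
      (convex_Icc _ _) hv hu
    simpa using this
  have hc1I : c1 ∈ Icc (a-1) (a+1) := ⟨hc1m.1.le, by linarith [hc1m.2]⟩
  have hc2I : c2 ∈ Icc (a-1) (a+1) := ⟨by linarith [hc2m.1], hc2m.2.le⟩
  have hdist : ‖c1 - c2‖ ≤ 2 := by
    rw [Real.norm_eq_abs, abs_le]
    constructor <;> [linarith [hc1m.1, hc2m.2]; linarith [hc1m.2, hc2m.1]]
  have key : 2*a^x - (a-1)^x - (a+1)^x = x * (c1 ^ (x-1) - c2 ^ (x-1)) := by
    rw [mul_sub, hc1e, hc2e]; ring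
  rw [key, abs_mul]
  have hd := hlip c1 hc1I c2 hc2I
  have hBnn : 0 ≤ B := by
    rw [hB]; positivity
  have : |c1 ^ (x-1) - c2 ^ (x-1)| ≤ B * 2 := by
    calc |c1 ^ (x-1) - c2 ^ (x-1)| ≤ B * ‖c1 - c2‖ := hd
      _ ≤ B * 2 := mul_le_mul_of_nonneg_left hdist hBnn
  calc |x| * |c1 ^ (x-1) - c2 ^ (x-1)| ≤ |x| * (B * 2) :=
        mul_le_mul_of_nonneg_left this (abs_nonneg _)
    _ = 2 * |x| * (|x-1| * ((2:ℝ)^(x-2) + 2^(2-x))) * a^(x-2) := by rw [hB]; ring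

/-- Square-summability of the limiting gamma-kernel correlations (Section 7 of the paper):
for every real `x`, `∑_{k=1}^∞ (2k^x - (k-1)^x - (k+1)^x)² / (16 k^{2x})` converges,
with real (rpow) powers. -/
theorem summable_sq_limiting_correlations (x : ℝ) :
    Summable (fun k : ℕ =>
      (2 * ((k : ℝ) + 1) ^ x - (k : ℝ) ^ x - ((k : ℝ) + 2) ^ x) ^ 2
        / (16 * ((k : ℝ) + 1) ^ (2 * x))) := by
  set C : ℝ := 2 * |x| * (|x-1| * ((2:ℝ)^(x-2) + 2^(2-x))) with hC
  have hCnn : 0 ≤ C := by rw [hC]; positivity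
  apply (summable_nat_add_iff 1).mp
  -- comparison series
  have hsum : Summable (fun n : ℕ => C^2/16 * ((n:ℝ)+2) ^ (-4:ℝ)) := by
    apply Summable.mul_left
    have h := (Real.summable_nat_rpow (p := (-4:ℝ))).mpr (by norm_num)
    have h2 := (summable_nat_add_iff 2).mpr h
    simpa [Nat.cast_add] using h2
  apply Summable.of_nonneg_of_le _ _ hsum
  · intro n
    positivity
  · intro n
    set a : ℝ := (n:ℝ) + 2 with haa
    have ha : 2 ≤ a := by rw [haa]; have := n.cast_nonneg (α := ℝ); linarith
    have ha0 : (0:ℝ) < a := by linarith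
    have hb := second_diff_bound x a ha
    have hcast : ((n+1 : ℕ) : ℝ) = a - 1 := by push_cast [haa]; ring
    rw [hcast]
    have e1 : a - 1 + 1 = a := by ring
    have e2 : a - 1 + 2 = a + 1 := by ring
    rw [e1, e2]
    have hnum : (2*a^x - (a-1)^x - (a+1)^x)^2 ≤ (C * a^(x-2))^2 := by
      rw [← sq_abs]
      exact pow_le_pow_left₀ (abs_nonneg _) hb 2
    have hden : (0:ℝ) < 16 * a ^ (2*x) := by positivity
    calc (2*a^x - (a-1)^x - (a+1)^x)^2 / (16 * a^(2*x))
        ≤ (C * a^(x-2))^2 / (16 * a^(2*x)) := by gcongr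
      _ = C^2/16 * a ^ (-4:ℝ) := by
          have h5 : a ^ ((x-2)*((2:ℕ):ℝ)) / a^(2*x) = a ^ (-4:ℝ) := by
            rw [← Real.rpow_sub ha0, show (x-2)*((2:ℕ):ℝ) - 2*x = -4 by push_cast; ring]
          rw [mul_pow, ← Real.rpow_natCast (a^(x-2)) 2, ← Real.rpow_mul ha0.le, ← h5]
          ring
end
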